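/- arXiv:2003.09279 — 6 statements merged into one kernel-verified Lean document; each statement's English description precedes it below -/
import Mathlib

section
/- Let f: ℝⁿ → ℝ be μ-strongly convex with L-Lipschitz continuous gradient, with minimizer x*. If the step size ε satisfies 0 < ε ≤ 2/(μ+L), then the gradient descent iterates x_{k+1} = x_k − ε∇f(x_k) satisfy ‖x_k − x*‖ ≤ (1 − με)^k ‖x_0 − x*‖ for all k. -/
open scoped RealInnerProductSpace

lemma my_descent {E : Type*} [NormedAddCommGroup E] [InnerProductSpace ℝ E] [CompleteSpace E]
    (L : ℝ) (hL : 0 ≤ L) (f : E → ℝ) (f' : E → E)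
    (hgrad : ∀ x, HasGradientAt f (f' x) x)
    (hlip : ∀ x y, ‖f' x - f' y‖ ≤ L * ‖x - y‖) (x y : E) :
    f y ≤ f x + ⟪f' x, y - x⟫ + L / 2 * ‖y - x‖ ^ 2 := by
  set d := y - x with hd
  have hcf' : Continuous f' := by
    refine (LipschitzWith.of_dist_le_mul (K := L.toNNReal) ?_).continuous
    intro a b
    rw [Real.coe_toNNReal L hL, dist_eq_norm, dist_eq_norm]
    exact hlip a b
  have hline : ∀ t : ℝ, HasDerivAt (fun t : ℝ => f (x + t • d)) ⟪f' (x + t • d), d⟫ t := by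
    intro t
    have h1 : HasDerivAt (fun t : ℝ => x + t • d) d t := by
      simpa using ((hasDerivAt_id t).smul_const d).const_add x
    have h2 := (hgrad (x + t • d)).hasFDerivAt
    have h3 := h2.comp_hasDerivAt t h1
    simp only [InnerProductSpace.toDual_apply_apply] at h3
    exact h3
  have hcont : Continuous fun t : ℝ => ⟪f' (x + t • d), d⟫ :=
    Continuous.inner (hcf'.comp (continuous_const.add (continuous_id.smul continuous_const)))
      continuous_const
  have hFTC : f y - f x = ∫ t in (0:ℝ)..1, ⟪f' (x + t • d), d⟫ := by
    have := intervalIntegral.integral_eq_sub_of_hasDerivAt (f := fun t : ℝ => f (x + t • d))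
      (fun t _ => hline t) (hcont.intervalIntegrable 0 1)
    simpa [hd] using this.symm
  have hmono : (∫ t in (0:ℝ)..1, ⟪f' (x + t • d), d⟫)
      ≤ ∫ t in (0:ℝ)..1, (⟪f' x, d⟫ + (L * ‖d‖ ^ 2) * t) := by
    apply intervalIntegral.integral_mono_on (by norm_num) (hcont.intervalIntegrable 0 1)
    · exact (Continuous.intervalIntegrable (by continuity) 0 1)
    · intro t ht
      have ht0 : 0 ≤ t := ht.1
      have ht1 : t ≤ 1 := ht.2
      have h1 : ⟪f' (x + t • d), d⟫ = ⟪f' x, d⟫ + ⟪f' (x + t • d) - f' x, d⟫ := by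
        rw [inner_sub_left]; ring
      have h2 : ⟪f' (x + t • d) - f' x, d⟫ ≤ ‖f' (x + t • d) - f' x‖ * ‖d‖ :=
        real_inner_le_norm _ _
      have h3 : ‖f' (x + t • d) - f' x‖ ≤ L * (t * ‖d‖) := by
        have := hlip (x + t • d) x
        simpa [norm_smul, abs_of_nonneg ht0] using this
      have h4 : ‖f' (x + t • d) - f' x‖ * ‖d‖ ≤ L * (t * ‖d‖) * ‖d‖ :=
        mul_le_mul_of_nonneg_right h3 (norm_nonneg _)
      rw [h1]
      nlinarith [norm_nonneg d]
  have hint : (∫ t in (0:ℝ)..1, (⟪f' x, d⟫ + (L * ‖d‖ ^ 2) * t))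
      = ⟪f' x, d⟫ + L / 2 * ‖d‖ ^ 2 := by
    rw [intervalIntegral.integral_add (continuous_const.intervalIntegrable 0 1)
      (Continuous.intervalIntegrable (by continuity) 0 1),
      intervalIntegral.integral_const_mul, integral_id]
    simp
    ring
  linarith [hFTC, hmono, hint]


section Helpers
variable {E : Type*} [NormedAddCommGroup E] [InnerProductSpace ℝ E]

lemma my_mono (μ : ℝ) (f : E → ℝ) (f' : E → E)
    (hstrong : ∀ x y, f y ≥ f x + ⟪f' x, y - x⟫ + μ / 2 * ‖y - x‖ ^ 2) (a b : E) :
    μ * ‖a - b‖ ^ 2 ≤ ⟪f' a - f' b, a - b⟫ := by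
  have h1 := hstrong a b
  have h2 := hstrong b a
  rw [norm_sub_rev b a] at h1
  have e1 : ⟪f' a, a - b⟫ = -⟪f' a, b - a⟫ := by rw [← inner_neg_right, neg_sub]
  rw [inner_sub_left]
  linarith [h1, h2, e1]

lemma my_coco (μ L : ℝ) (hμ : 0 < μ) (hμL : μ ≤ L) (f : E → ℝ) (f' : E → E)
    (hstrong : ∀ x y, f y ≥ f x + ⟪f' x, y - x⟫ + μ / 2 * ‖y - x‖ ^ 2)
    (hlip : ∀ x y, ‖f' x - f' y‖ ≤ L * ‖x - y‖)
    (hdesc : ∀ x y, f y ≤ f x + ⟪f' x, y - x⟫ + L / 2 * ‖y - x‖ ^ 2) (x y : E) :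
    ‖(f' x - f' y) - μ • (x - y)‖ ^ 2 ≤ (L - μ) * ⟪(f' x - f' y) - μ • (x - y), x - y⟫ := by
  set h : E → ℝ := fun z => f z - μ / 2 * ‖z‖ ^ 2 with hh
  set h' : E → E := fun z => f' z - μ • z with hh'
  have hgap : ∀ a b : E, h b - h a - ⟪h' a, b - a⟫
      = f b - f a - ⟪f' a, b - a⟫ - μ / 2 * ‖b - a‖ ^ 2 := by
    intro a b
    have i1 : ⟪a, b - a⟫ = ⟪a, b⟫ - ‖a‖ ^ 2 := by
      rw [inner_sub_right, real_inner_self_eq_norm_sq]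
    have i2 : ‖b - a‖ ^ 2 = ‖b‖ ^ 2 - 2 * ⟪b, a⟫ + ‖a‖ ^ 2 := norm_sub_sq_real b a
    have i3 : ⟪b, a⟫ = ⟪a, b⟫ := real_inner_comm _ _
    have i4 : ⟪h' a, b - a⟫ = ⟪f' a, b - a⟫ - μ * ⟪a, b - a⟫ := by
      simp only [hh']
      rw [inner_sub_left, real_inner_smul_left]
    simp only [hh]
    rw [i4, i1, i2, i3]
    ring
  have hid : h' x - h' y = (f' x - f' y) - μ • (x - y) := by
    simp only [hh', smul_sub]
    abel
  clear_value h h'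
  have hconv : ∀ a b : E, h a + ⟪h' a, b - a⟫ ≤ h b := by
    intro a b
    have h1 := hstrong a b
    have h2 := hgap a b
    linarith
  have hdesc' : ∀ a b : E, h b ≤ h a + ⟪h' a, b - a⟫ + (L - μ) / 2 * ‖b - a‖ ^ 2 := by
    intro a b
    have h1 := hdesc a b
    have h2 := hgap a b
    linarith
  rcases eq_or_lt_of_le hμL with hEq | hLt
  · -- μ = L
    subst hEq
    have hm := my_mono μ f f' hstrong x y
    have hGn : ‖f' x - f' y‖ ≤ μ * ‖x - y‖ := hlip x y
    have hGn2 : ‖f' x - f' y‖ ^ 2 ≤ (μ * ‖x - y‖) ^ 2 :=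
      pow_le_pow_left₀ (norm_nonneg _) hGn 2
    have eG : ‖(f' x - f' y) - μ • (x - y)‖ ^ 2
        = ‖f' x - f' y‖ ^ 2 - 2 * μ * ⟪f' x - f' y, x - y⟫ + μ ^ 2 * ‖x - y‖ ^ 2 := by
      rw [norm_sub_sq_real, real_inner_smul_right, norm_smul, Real.norm_eq_abs,
        mul_pow, sq_abs]
      ring
    nlinarith [hm, hGn2, eG]
  · -- μ < L
    have hl : (0:ℝ) < L - μ := by linarith
    have hdag : ∀ a b : E, h a + ⟪h' a, b - a⟫ + 1 / (2 * (L - μ)) * ‖h' b - h' a‖ ^ 2 ≤ h b := by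
      intro a b
      set z := b - (1 / (L - μ)) • (h' b - h' a) with hz
      have c1 := hconv a z
      have c2 := hdesc' b z
      have e1 : ⟪h' a, z - a⟫ = ⟪h' a, b - a⟫ - (1 / (L - μ)) * ⟪h' a, h' b - h' a⟫ := by
        have hza : z - a = (b - a) - (1 / (L - μ)) • (h' b - h' a) := by rw [hz]; abel
        rw [hza, inner_sub_right, real_inner_smul_right]
      have ezb : z - b = -((1 / (L - μ)) • (h' b - h' a)) := by rw [hz]; abel
      have e2 : ⟪h' b, z - b⟫ = -((1 / (L - μ)) * ⟪h' b, h' b - h' a⟫) := by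
        rw [ezb, inner_neg_right, real_inner_smul_right]
      have e3 : ‖z - b‖ ^ 2 = (1 / (L - μ)) ^ 2 * ‖h' b - h' a‖ ^ 2 := by
        rw [ezb, norm_neg, norm_smul, Real.norm_eq_abs, mul_pow, sq_abs]
      have e4 : (1 / (L - μ)) * ⟪h' b, h' b - h' a⟫ - (1 / (L - μ)) * ⟪h' a, h' b - h' a⟫
          = (1 / (L - μ)) * ‖h' b - h' a‖ ^ 2 := by
        rw [← mul_sub, ← inner_sub_left, real_inner_self_eq_norm_sq]
      have key : (1 / (L - μ)) * ‖h' b - h' a‖ ^ 2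
          - (L - μ) / 2 * ((1 / (L - μ)) ^ 2 * ‖h' b - h' a‖ ^ 2)
          = 1 / (2 * (L - μ)) * ‖h' b - h' a‖ ^ 2 := by
        field_simp
        ring
      rw [e1] at c1
      rw [e2, e3] at c2
      linarith [c1, c2, e4, key]
    have hd1 := hdag x y
    have hd2 := hdag y x
    rw [norm_sub_rev (h' x) (h' y)] at hd2
    have e5 : ⟪h' y, x - y⟫ = -⟪h' y, y - x⟫ := by rw [← inner_neg_right, neg_sub]
    have e6 : ⟪h' x - h' y, y - x⟫ = ⟪h' x, y - x⟫ - ⟪h' y, y - x⟫ := inner_sub_left _ _ _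
    have e9 : (1 / (L - μ)) * ‖h' y - h' x‖ ^ 2
        = 1 / (2 * (L - μ)) * ‖h' y - h' x‖ ^ 2 + 1 / (2 * (L - μ)) * ‖h' y - h' x‖ ^ 2 := by
      field_simp
      ring
    have hfinal : (1 / (L - μ)) * ‖h' y - h' x‖ ^ 2 ≤ -⟪h' x - h' y, y - x⟫ := by
      linarith [hd1, hd2, e5, e6, e9]
    have e7 : ⟪h' x - h' y, x - y⟫ = -⟪h' x - h' y, y - x⟫ := by
      rw [← inner_neg_right, neg_sub]
    have e8 : ‖h' y - h' x‖ = ‖h' x - h' y‖ := norm_sub_rev _ _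
    rw [← hid, e7]
    rw [e8] at hfinal
    calc ‖h' x - h' y‖ ^ 2 = (L - μ) * ((1 / (L - μ)) * ‖h' x - h' y‖ ^ 2) := by
          field_simp
      _ ≤ (L - μ) * -⟪h' x - h' y, y - x⟫ := mul_le_mul_of_nonneg_left hfinal hl.le

end Helpers



/-- Gradient descent on a μ-strongly convex function with L-Lipschitz gradient,
step size 0 < ε ≤ 2/(μ+L), contracts with factor (1 - με) per step. -/
theorem stmt_0 {n : ℕ} (μ L ε : ℝ) (hμ : 0 < μ) (hμL : μ ≤ L)
    (f : EuclideanSpace ℝ (Fin n) → ℝ)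
    (f' : EuclideanSpace ℝ (Fin n) → EuclideanSpace ℝ (Fin n))
    (hgrad : ∀ x, HasGradientAt f (f' x) x)
    (hstrong : ∀ x y, f y ≥ f x + ⟪f' x, y - x⟫ + μ / 2 * ‖y - x‖ ^ 2)
    (hlip : ∀ x y, ‖f' x - f' y‖ ≤ L * ‖x - y‖)
    (xstar : EuclideanSpace ℝ (Fin n)) (hmin : ∀ x, f xstar ≤ f x)
    (hε0 : 0 < ε) (hε : ε ≤ 2 / (μ + L))
    (x : ℕ → EuclideanSpace ℝ (Fin n))
    (hx : ∀ k, x (k + 1) = x k - ε • f' (x k)) :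
    ∀ k : ℕ, ‖x k - xstar‖ ≤ (1 - μ * ε) ^ k * ‖x 0 - xstar‖ := by
  have hL0 : (0:ℝ) < L := lt_of_lt_of_le hμ hμL
  have hdesc : ∀ a b, f b ≤ f a + ⟪f' a, b - a⟫ + L / 2 * ‖b - a‖ ^ 2 :=
    fun a b => my_descent L hL0.le f f' hgrad hlip a b
  have hg0 : f' xstar = 0 := by
    have hloc : IsLocalMin f xstar := Filter.Eventually.of_forall hmin
    have h0 := hloc.hasFDerivAt_eq_zero (hgrad xstar).hasFDerivAt
    apply (InnerProductSpace.toDual ℝ (EuclideanSpace ℝ (Fin n))).injective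
    simpa using h0
  have hμε : μ * ε ≤ 1 := by
    have hsum : ε * (μ + L) ≤ 2 := by
      rw [le_div_iff₀ (by positivity)] at hε
      linarith
    nlinarith [mul_le_mul_of_nonneg_left hμL hε0.le]
  have h1ε : (0:ℝ) ≤ 1 - μ * ε := by linarith
  have step : ∀ k, ‖x (k + 1) - xstar‖ ≤ (1 - μ * ε) * ‖x k - xstar‖ := by
    intro k
    set D := x k - xstar with hD
    set G := f' (x k) with hG
    have hxk : x (k + 1) - xstar = D - ε • G := by
      rw [hx k, hD, hG, sub_right_comm]
    have hcc : ‖G - μ • D‖ ^ 2 ≤ (L - μ) * ⟪G - μ • D, D⟫ := by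
      have := my_coco μ L hμ hμL f f' hstrong hlip hdesc (x k) xstar
      rw [hg0] at this
      simpa [hD, hG] using this
    have hm : μ * ‖D‖ ^ 2 ≤ ⟪G, D⟫ := by
      have := my_mono μ f f' hstrong (x k) xstar
      rw [hg0] at this
      simpa [hD, hG] using this
    have hsum : ε * (μ + L) ≤ 2 := by
      rw [le_div_iff₀ (by positivity)] at hε
      linarith
    have eD : ‖D - ε • G‖ ^ 2 = ‖D‖ ^ 2 - 2 * ε * ⟪G, D⟫ + ε ^ 2 * ‖G‖ ^ 2 := by
      rw [norm_sub_sq_real, real_inner_smul_right, norm_smul, Real.norm_eq_abs, mul_pow,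
        sq_abs, real_inner_comm]
      ring
    have eG : ‖G - μ • D‖ ^ 2 = ‖G‖ ^ 2 - 2 * μ * ⟪G, D⟫ + μ ^ 2 * ‖D‖ ^ 2 := by
      rw [norm_sub_sq_real, real_inner_smul_right, norm_smul, Real.norm_eq_abs, mul_pow,
        sq_abs]
      ring
    have eI : ⟪G - μ • D, D⟫ = ⟪G, D⟫ - μ * ‖D‖ ^ 2 := by
      rw [inner_sub_left, real_inner_smul_left, real_inner_self_eq_norm_sq]
    have hcc2 : ‖G‖ ^ 2 ≤ (L + μ) * ⟪G, D⟫ - μ * L * ‖D‖ ^ 2 := by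
      rw [eG, eI] at hcc
      nlinarith [hcc]
    have hsq : ‖D - ε • G‖ ^ 2 ≤ ((1 - μ * ε) * ‖D‖) ^ 2 := by
      have a1 : 0 ≤ ε ^ 2 * (((L + μ) * ⟪G, D⟫ - μ * L * ‖D‖ ^ 2) - ‖G‖ ^ 2) :=
        mul_nonneg (sq_nonneg ε) (by linarith)
      have a2 : 0 ≤ (ε * (2 - ε * (μ + L))) * (⟪G, D⟫ - μ * ‖D‖ ^ 2) :=
        mul_nonneg (mul_nonneg hε0.le (by linarith)) (by linarith)
      nlinarith [eD, a1, a2]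
    rw [hxk]
    have hnn : (0:ℝ) ≤ (1 - μ * ε) * ‖D‖ := mul_nonneg h1ε (norm_nonneg _)
    exact (pow_le_pow_iff_left₀ (norm_nonneg _) hnn two_ne_zero).mp hsq
  intro k
  induction k with
  | zero => simp
  | succ k ih =>
    calc ‖x (k + 1) - xstar‖ ≤ (1 - μ * ε) * ‖x k - xstar‖ := step k
      _ ≤ (1 - μ * ε) * ((1 - μ * ε) ^ k * ‖x 0 - xstar‖) :=
          mul_le_mul_of_nonneg_left ih h1ε
      _ = (1 - μ * ε) ^ (k + 1) * ‖x 0 - xstar‖ := by ring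
end

section
/- Given positive constants μ ≤ L, σ_min(B) ≤ σ_max(B), and γ with 0 < γ < μ²σ_min²(B)/(Lσ_max³(B)), define c₁(ε₁,ε₂) = 1 − με₁ + ε₂σ_max²(B)/μ + ε₂σ_max(B)/γ and c₂(ε₂) = 1 − ε₂σ_min²(B)/L + ε₂γσ_max³(B)/μ². Then c = max{c₁,c₂} over 0 < ε₁ ≤ 2/(μ+L) is minimized at ε₁ = 2/(μ+L) and ε₂ = (σ_max²(B)/μ + σ_max(B)/γ + σ_min²(B)/L − γσ_max³(B)/μ²)^{−1} · 2μ/(L+μ), where c₁ = c₂. -/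
/-- Optimal step sizes for the primal-dual contraction factor (Corollary 2):
max{c₁, c₂} over 0 < ε₁ ≤ 2/(μ+L), ε₂ > 0 is minimized at ε₁ = 2/(μ+L) and
ε₂ = (σ_max²/μ + σ_max/γ + σ_min²/L − γσ_max³/μ²)⁻¹ · 2μ/(L+μ), where c₁ = c₂. -/
theorem stmt_9 (μ L σmin σmax γ : ℝ) (hμ : 0 < μ) (hμL : μ ≤ L)
    (hσmin0 : 0 < σmin) (hσ : σmin ≤ σmax)
    (hγ0 : 0 < γ) (hγ : γ < μ ^ 2 * σmin ^ 2 / (L * σmax ^ 3)) :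
    let c₁ : ℝ → ℝ → ℝ := fun ε₁ ε₂ => 1 - μ * ε₁ + ε₂ * σmax ^ 2 / μ + ε₂ * σmax / γ
    let c₂ : ℝ → ℝ := fun ε₂ => 1 - ε₂ * σmin ^ 2 / L + ε₂ * γ * σmax ^ 3 / μ ^ 2
    let ε₁opt : ℝ := 2 / (μ + L)
    let ε₂opt : ℝ :=
      (σmax ^ 2 / μ + σmax / γ + σmin ^ 2 / L - γ * σmax ^ 3 / μ ^ 2)⁻¹ * (2 * μ / (L + μ))
    c₁ ε₁opt ε₂opt = c₂ ε₂opt ∧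
    ∀ ε₁ ε₂ : ℝ, 0 < ε₁ → ε₁ ≤ 2 / (μ + L) → 0 < ε₂ →
      max (c₁ ε₁opt ε₂opt) (c₂ ε₂opt) ≤ max (c₁ ε₁ ε₂) (c₂ ε₂) := by
  intro c₁ c₂ ε₁opt ε₂opt
  have hL : 0 < L := lt_of_lt_of_le hμ hμL
  have hσmax : 0 < σmax := lt_of_lt_of_le hσmin0 hσ
  have hμL' : 0 < μ + L := by linarith
  have hγ' : γ * (L * σmax ^ 3) < μ ^ 2 * σmin ^ 2 :=
    (lt_div_iff₀ (by positivity)).mp hγ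
  have hD : 0 < σmin ^ 2 / L - γ * σmax ^ 3 / μ ^ 2 := by
    rw [sub_pos, div_lt_div_iff₀ (by positivity) (by positivity)]
    nlinarith
  have hA : 0 < σmax ^ 2 / μ + σmax / γ := by positivity
  have hS : 0 < σmax ^ 2 / μ + σmax / γ + σmin ^ 2 / L - γ * σmax ^ 3 / μ ^ 2 := by linarith
  have h1 : ε₂opt * (σmax ^ 2 / μ + σmax / γ + σmin ^ 2 / L - γ * σmax ^ 3 / μ ^ 2)
      = 2 * μ / (μ + L) := by
    simp only [ε₂opt]
    rw [mul_comm, ← mul_assoc, mul_inv_cancel₀ hS.ne', one_mul, add_comm L μ]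
  have heq : c₁ ε₁opt ε₂opt = c₂ ε₂opt := by
    simp only [c₁, c₂, ε₁opt]
    have hne : μ + L ≠ 0 := hμL'.ne'
    field_simp at h1 ⊢
    linarith [h1]
  refine ⟨heq, fun ε₁ ε₂ h1 h2 h3 => ?_⟩
  rw [heq, max_self]
  rcases le_total ε₂ ε₂opt with h | h
  · refine le_trans ?_ (le_max_right _ _)
    simp only [c₂]
    have key := mul_nonneg (sub_nonneg.mpr h) hD.le
    clear_value ε₂opt
    have hid : (1 - ε₂ * σmin ^ 2 / L + ε₂ * γ * σmax ^ 3 / μ ^ 2)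
        - (1 - ε₂opt * σmin ^ 2 / L + ε₂opt * γ * σmax ^ 3 / μ ^ 2)
        = (ε₂opt - ε₂) * (σmin ^ 2 / L - γ * σmax ^ 3 / μ ^ 2) := by ring
    linarith [key, hid]
  · refine le_trans ?_ (le_max_left _ _)
    rw [← heq]
    simp only [c₁, ε₁opt]
    have hA1 : (0:ℝ) ≤ σmax ^ 2 / μ := by positivity
    have hA2 : (0:ℝ) ≤ σmax / γ := by positivity
    have k1 := mul_le_mul_of_nonneg_left h2 hμ.le
    have k2 := mul_nonneg (sub_nonneg.mpr h) (add_nonneg hA1 hA2)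
    clear_value ε₂opt
    have hid : (1 - μ * ε₁ + ε₂ * σmax ^ 2 / μ + ε₂ * σmax / γ)
        - (1 - μ * (2 / (μ + L)) + ε₂opt * σmax ^ 2 / μ + ε₂opt * σmax / γ)
        = (μ * (2 / (μ + L)) - μ * ε₁)
          + (ε₂ - ε₂opt) * (σmax ^ 2 / μ + σmax / γ) := by ring
    linarith [k1, k2, hid]
end

section
/- Let μ, L, σ_min, σ_max > 0 with μ ≤ L and σ_min ≤ σ_max. Set γ = μ²σ_min²/(2Lσ_max³), ε₁ = 2/(L+μ), ε₂ = 4μ³Lσ_min²(μ+L)^{−1}(4L²σ_max⁴ + μ²σ_min⁴ + 2Lμσ_min²σ_max²)^{−1}. Then ε₂ ≤ 2/(σ_max²/μ + σ_min²/L), and the contraction factor c = 1 − ε₂σ_min²/(2L) satisfies c ≤ 1 − 1/(κ³(4τ² + 2τ + 1)) where κ = L/μ and τ = σ_max²/σ_min². -/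
/-- Corollary 3: with γ = μ²σ_min²/(2Lσ_max³), ε₁ = 2/(L+μ) and the stated ε₂,
ε₂ is an admissible step size and the contraction factor c = 1 − ε₂σ_min²/(2L)
satisfies c ≤ 1 − 1/(κ³(4τ² + 2τ + 1)), κ = L/μ, τ = σ_max²/σ_min². -/
theorem stmt_10 (μ L σmin σmax : ℝ) (hμ : 0 < μ) (hμL : μ ≤ L)
    (hσmin0 : 0 < σmin) (hσ : σmin ≤ σmax) :
    let ε₂ : ℝ := 4 * μ ^ 3 * L * σmin ^ 2 * (μ + L)⁻¹ *
      (4 * L ^ 2 * σmax ^ 4 + μ ^ 2 * σmin ^ 4 + 2 * L * μ * σmin ^ 2 * σmax ^ 2)⁻¹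
    let κ : ℝ := L / μ
    let τ : ℝ := σmax ^ 2 / σmin ^ 2
    ε₂ ≤ 2 / (σmax ^ 2 / μ + σmin ^ 2 / L) ∧
    1 - ε₂ * σmin ^ 2 / (2 * L) ≤ 1 - 1 / (κ ^ 3 * (4 * τ ^ 2 + 2 * τ + 1)) := by
  intro ε₂ κ τ
  have hL : 0 < L := lt_of_lt_of_le hμ hμL
  have hσmax : 0 < σmax := lt_of_lt_of_le hσmin0 hσ
  have hD : 0 < 4 * L ^ 2 * σmax ^ 4 + μ ^ 2 * σmin ^ 4 + 2 * L * μ * σmin ^ 2 * σmax ^ 2 := by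
    positivity
  have hsum : 0 < μ + L := by linarith
  have hσ2 : σmin ^ 2 ≤ σmax ^ 2 := by nlinarith
  constructor
  · show 4 * μ ^ 3 * L * σmin ^ 2 * (μ + L)⁻¹ *
      (4 * L ^ 2 * σmax ^ 4 + μ ^ 2 * σmin ^ 4 + 2 * L * μ * σmin ^ 2 * σmax ^ 2)⁻¹ ≤
      2 / (σmax ^ 2 / μ + σmin ^ 2 / L)
    rw [div_add_div _ _ hμ.ne' hL.ne', div_div_eq_mul_div, inv_eq_one_div, inv_eq_one_div, mul_one_div, mul_one_div, div_div,
      div_le_div_iff₀ (by positivity) (by positivity)]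
    have h1 : 0 < σmax ^ 2 / μ + σmin ^ 2 / L := by positivity
    have key : 2*μ^2*σmin^2*(σmax^2*L+μ*σmin^2) ≤
        (μ+L)*(4 * L ^ 2 * σmax ^ 4 + μ ^ 2 * σmin ^ 4 + 2 * L * μ * σmin ^ 2 * σmax ^ 2) := by
      have t1 : 0 ≤ μ^2*σmin^4*(L-μ) :=
        mul_nonneg (by positivity) (sub_nonneg.2 hμL)
      have t2 : 0 ≤ 2*L^2*μ*σmin^2*σmax^2 := by positivity
      have t3 : 0 ≤ 4*L^2*(μ+L)*σmax^4 :=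
        mul_nonneg (mul_nonneg (by positivity) hsum.le) (by positivity)
      nlinarith [t1, t2, t3]
    nlinarith [mul_le_mul_of_nonneg_left key (by positivity : (0:ℝ) ≤ 2*μ*L)]
  · have key : 1 / (κ ^ 3 * (4 * τ ^ 2 + 2 * τ + 1)) ≤ ε₂ * σmin ^ 2 / (2 * L) := by
      have hR : ε₂ * σmin ^ 2 / (2 * L) = (4 * μ ^ 3 * σmin ^ 4) /
          (2 * (μ + L) * (4 * L ^ 2 * σmax ^ 4 + μ ^ 2 * σmin ^ 4 + 2 * L * μ * σmin ^ 2 * σmax ^ 2)) := by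
        show 4 * μ ^ 3 * L * σmin ^ 2 * (μ + L)⁻¹ *
          (4 * L ^ 2 * σmax ^ 4 + μ ^ 2 * σmin ^ 4 + 2 * L * μ * σmin ^ 2 * σmax ^ 2)⁻¹ *
          σmin ^ 2 / (2 * L) = _
        field_simp
      have hLft : 1 / (κ ^ 3 * (4 * τ ^ 2 + 2 * τ + 1)) = (μ ^ 3 * σmin ^ 4) /
          (L ^ 3 * (4 * σmax ^ 4 + 2 * σmin ^ 2 * σmax ^ 2 + σmin ^ 4)) := by
        show 1 / ((L / μ) ^ 3 * (4 * (σmax ^ 2 / σmin ^ 2) ^ 2 + 2 * (σmax ^ 2 / σmin ^ 2) + 1)) = _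
        rw [div_eq_div_iff (by positivity) (by positivity)]
        field_simp
      rw [hR, hLft, div_le_div_iff₀ (by positivity) (by positivity)]
      have hd : (4 * L ^ 2 * σmax ^ 4 + μ ^ 2 * σmin ^ 4 + 2 * L * μ * σmin ^ 2 * σmax ^ 2) ≤
          L ^ 2 * (4 * σmax ^ 4 + 2 * σmin ^ 2 * σmax ^ 2 + σmin ^ 4) := by
        nlinarith [mul_nonneg (mul_nonneg (sub_nonneg.2 hμL) (by positivity : (0:ℝ) ≤ L + μ)) (pow_pos hσmin0 4).le,
          mul_nonneg (mul_nonneg (mul_nonneg hL.le (sub_nonneg.2 hμL)) (sq_nonneg σmin)) (sq_nonneg σmax)]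
      have h2 : (μ + L) * (4 * L ^ 2 * σmax ^ 4 + μ ^ 2 * σmin ^ 4 + 2 * L * μ * σmin ^ 2 * σmax ^ 2) ≤
          (2 * L) * (L ^ 2 * (4 * σmax ^ 4 + 2 * σmin ^ 2 * σmax ^ 2 + σmin ^ 4)) :=
        mul_le_mul (by linarith) hd hD.le (by positivity)
      nlinarith [mul_le_mul_of_nonneg_left h2 (by positivity : (0:ℝ) ≤ μ ^ 3 * σmin ^ 4)]
    linarith
end

section
/- Let H_f be a symmetric n×n matrix and B ∈ ℝ^{m×n}. If yᵀH_f y > 0 for all y ≠ 0 with Bᵀ B y = 0 is interpreted as yᵀBᵀBy = 0 (i.e., By = 0), then there exists a scalar ᾱ such that for all α > ᾱ, H_f + αBᵀB is positive definite. -/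
open scoped Matrix
open Filter Topology

private lemma quad_smul {n : ℕ} (M : Matrix (Fin n) (Fin n) ℝ) (c : ℝ) (y : Fin n → ℝ) :
    (c • y) ⬝ᵥ M.mulVec (c • y) = c ^ 2 * (y ⬝ᵥ M.mulVec y) := by
  rw [Matrix.mulVec_smul, dotProduct_smul, smul_dotProduct]
  ring_nf

/-- Augmented Lagrangian convexification: if the symmetric matrix H_f is positive
definite on the nullspace of B, then H_f + αBᵀB is positive definite for all
sufficiently large α. -/
theorem stmt_11 {n m : ℕ} (Hf : Matrix (Fin n) (Fin n) ℝ) (hHf : Hf.IsHermitian)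
    (B : Matrix (Fin m) (Fin n) ℝ)
    (hpos : ∀ y : Fin n → ℝ, y ≠ 0 → B.mulVec y = 0 → 0 < y ⬝ᵥ Hf.mulVec y) :
    ∃ abar : ℝ, ∀ α : ℝ, abar < α → (Hf + α • (B.transpose * B)).PosDef := by
  classical
  set f : (Fin n → ℝ) → ℝ := fun y => y ⬝ᵥ Hf.mulVec y with hf
  set g : (Fin n → ℝ) → ℝ := fun y => (B.mulVec y) ⬝ᵥ (B.mulVec y) with hg
  have hfc : Continuous f := continuous_id.dotProduct (continuous_const.matrix_mulVec continuous_id)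
  have hgc : Continuous g :=
    (continuous_const.matrix_mulVec continuous_id).dotProduct
      (continuous_const.matrix_mulVec continuous_id)
  have hg0 : ∀ y, 0 ≤ g y := by
    intro y
    simp only [hg, dotProduct]
    exact Finset.sum_nonneg fun i _ => mul_self_nonneg _
  -- key: quadratic form of the combined matrix
  have hquad : ∀ (α : ℝ) (y : Fin n → ℝ),
      y ⬝ᵥ (Hf + α • (B.transpose * B)).mulVec y = f y + α * g y := by
    intro α y
    rw [Matrix.add_mulVec, dotProduct_add, Matrix.smul_mulVec,
      dotProduct_smul]
    congr 1
    rw [smul_eq_mul]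
    congr 1
    rw [← Matrix.mulVec_mulVec, Matrix.dotProduct_mulVec, Matrix.vecMul_transpose]
  -- claim: some α₀ works on the unit sphere
  have key : ∃ α₀ : ℝ, ∀ y : Fin n → ℝ, ‖y‖ = 1 → 0 < f y + α₀ * g y := by
    by_contra hcon
    push_neg at hcon
    choose u hu1 hu2 using fun k : ℕ => hcon (k : ℝ)
    have husphere : ∀ k, u k ∈ Metric.sphere (0 : Fin n → ℝ) 1 := by
      intro k; simpa [mem_sphere_iff_norm] using hu1 k
    obtain ⟨x, hxs, φ, hφ, hconv⟩ :=
      (isCompact_sphere (0 : Fin n → ℝ) 1).tendsto_subseq husphere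
    have hxnorm : ‖x‖ = 1 := by simpa [mem_sphere_iff_norm] using hxs
    have hxne : x ≠ 0 := by intro h; rw [h] at hxnorm; simp at hxnorm
    have hftend : Tendsto (fun k => f (u (φ k))) atTop (𝓝 (f x)) :=
      (hfc.continuousAt.tendsto).comp hconv
    have hgtend : Tendsto (fun k => g (u (φ k))) atTop (𝓝 (g x)) :=
      (hgc.continuousAt.tendsto).comp hconv
    -- g x = 0
    have hgx : g x = 0 := by
      by_contra hgx
      have hgxpos : 0 < g x := lt_of_le_of_ne (by
        exact le_of_tendsto_of_tendsto tendsto_const_nhds hgtend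
          (Eventually.of_forall fun k => hg0 _)) (Ne.symm hgx)
      have hφtop : Tendsto (fun k => ((φ k : ℕ) : ℝ)) atTop atTop :=
        tendsto_natCast_atTop_atTop.comp hφ.tendsto_atTop
      have hprod : Tendsto (fun k => ((φ k : ℕ) : ℝ) * g (u (φ k))) atTop atTop :=
        hφtop.atTop_mul_pos hgxpos hgtend
      have hbound : ∀ k, ((φ k : ℕ) : ℝ) * g (u (φ k)) ≤ - f (u (φ k)) := by
        intro k
        have := hu2 (φ k)
        linarith
      have h1 : ∀ᶠ k in atTop, - f x + 1 < ((φ k : ℕ) : ℝ) * g (u (φ k)) :=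
        hprod.eventually_gt_atTop _
      have h2 : ∀ᶠ k in atTop, - f (u (φ k)) < - f x + 1 :=
        (hftend.neg).eventually_lt_const (by linarith)
      obtain ⟨k, hk1, hk2⟩ := (h1.and h2).exists
      have := hbound k
      linarith
    -- f x ≤ 0
    have hfx : f x ≤ 0 := by
      refine le_of_tendsto hftend (Eventually.of_forall fun k => ?_)
      have h1 := hu2 (φ k)
      have h2 : 0 ≤ ((φ k : ℕ) : ℝ) * g (u (φ k)) :=
        mul_nonneg (Nat.cast_nonneg _) (hg0 _)
      linarith
    have hBx : B.mulVec x = 0 := by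
      have := (dotProduct_self_eq_zero (v := B.mulVec x)).mp hgx
      exact this
    exact absurd (hpos x hxne hBx) (by simpa [hf] using not_lt.mpr hfx)
  obtain ⟨α₀, hα₀⟩ := key
  refine ⟨α₀, fun α hα => ?_⟩
  have hherm : (Hf + α • (B.transpose * B)).IsHermitian := by
    refine hHf.add ?_
    have h1 : (B.transpose * B).IsHermitian := by simpa [Matrix.conjTranspose_eq_transpose_of_trivial] using Matrix.isHermitian_conjTranspose_mul_self B
    unfold Matrix.IsHermitian at h1 ⊢
    rw [Matrix.conjTranspose_smul, h1]
    simp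
  refine Matrix.PosDef.of_dotProduct_mulVec_pos hherm (fun y hy => ?_)
  have hnorm : ‖y‖ ≠ 0 := norm_ne_zero_iff.mpr hy
  set c : ℝ := ‖y‖⁻¹ with hc
  have hcpos : 0 < c := by positivity
  have hz : ‖c • y‖ = 1 := by
    rw [norm_smul, hc, Real.norm_eq_abs, abs_inv, abs_norm]
    field_simp
  have hkey := hα₀ (c • y) hz
  have hfz : f (c • y) = c ^ 2 * f y := quad_smul Hf c y
  have hgz : g (c • y) = c ^ 2 * g y := by
    simp only [hg, Matrix.mulVec_smul, dotProduct_smul, smul_dotProduct,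
      smul_eq_mul]
    ring
  rw [hfz, hgz] at hkey
  have hgy := hg0 y
  have hstep : 0 < c ^ 2 * (f y + α * g y) := by
    have : c ^ 2 * (f y + α₀ * g y) ≤ c ^ 2 * (f y + α * g y) := by
      apply mul_le_mul_of_nonneg_left _ (by positivity)
      nlinarith
    nlinarith
  have hfin : 0 < f y + α * g y := by
    have hc2 : 0 < c ^ 2 := by positivity
    nlinarith
  show 0 < star y ⬝ᵥ (Hf + α • (B.transpose * B)).mulVec y
  simpa [hquad α y] using hfin
end

section
/- Suppose f: ℝⁿ → ℝ is twice differentiable with μIₙ ⪯ ∇²f(x) ⪯ LIₙ for all x (0 < μ ≤ L) and let α > 0. Define h(x, x̂) = f(x) + (α/2)‖x − x̂‖². Then every Hessian ∇²h satisfies H_low ⪯ ∇²h ⪯ H_up, where H_low = [[(μ+α)Iₙ, −αIₙ], [−αIₙ, αIₙ]] and H_up = [[(L+α)Iₙ, −αIₙ], [−αIₙ, αIₙ]], and consequently the condition number κ_h = λ_max(∇²h)/λ_min(∇²h) satisfies (2α+μ+√(μ²+4α²))/(2α+L−√(L²+4α²)) ≤ κ_h ≤ (2α+L+√(L²+4α²))/(2α+μ−√(μ²+4α²)).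 -/
open scoped Matrix

private lemma aux_key (A C al a b : ℝ) (hA : 0 ≤ A) (hC : 0 ≤ C) (hAC : A * C = al ^ 2)
    (hal : 0 < al) : 2 * al * (a * b) ≤ A * a ^ 2 + C * b ^ 2 := by
  have hAne : A ≠ 0 := by
    intro h
    rw [h, zero_mul] at hAC
    exact (pow_pos hal 2).ne' hAC.symm
  have hApos : 0 < A := hA.lt_of_ne (Ne.symm hAne)
  nlinarith [sq_nonneg (A * a - al * b), hApos, hAC]

private lemma aux_scalar_low (μ α s X Y P F a b : ℝ) (hα : 0 < α) (hμ : 0 < μ)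
    (hs : s ^ 2 = μ ^ 2 + 4 * α ^ 2) (hs0 : 0 ≤ s) (ha2 : a ^ 2 = X) (hb2 : b ^ 2 = Y)
    (hP : P ≤ a * b) (hF : μ * X ≤ F) :
    (α + μ / 2 - s / 2) * (X + Y) ≤ F + α * X - 2 * α * P + α * Y := by
  have hμs : μ ≤ s := by nlinarith
  have h1 : 2 * α * P ≤ 2 * α * (a * b) := by nlinarith
  have hkey : 2 * α * (a * b) ≤ (μ + s) / 2 * a ^ 2 + (s - μ) / 2 * b ^ 2 :=
    aux_key _ _ α a b (by linarith) (by linarith) (by nlinarith) hα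
  nlinarith [hkey, h1, hF]

private lemma aux_scalar_up (L α s X Y P F a b : ℝ) (hα : 0 < α) (hL : 0 < L)
    (hs : s ^ 2 = L ^ 2 + 4 * α ^ 2) (hs0 : 0 ≤ s) (ha2 : a ^ 2 = X) (hb2 : b ^ 2 = Y)
    (hP : -(a * b) ≤ P) (hF : F ≤ L * X) :
    F + α * X - 2 * α * P + α * Y ≤ (α + L / 2 + s / 2) * (X + Y) := by
  have hLs : L ≤ s := by nlinarith
  have h1 : -(2 * α * (a * b)) ≤ 2 * α * P := by nlinarith
  have hkey : 2 * α * (a * b) ≤ (s - L) / 2 * a ^ 2 + (s + L) / 2 * b ^ 2 :=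
    aux_key _ _ α a b (by linarith) (by linarith) (by nlinarith) hα
  nlinarith [hkey, h1, hF]

private lemma aux_test_low (μ α s : ℝ) (hs : s ^ 2 = μ ^ 2 + 4 * α ^ 2) (hs0 : 0 ≤ s) :
    (α + μ / 2 + s / 2) * (α * α + ((μ - s) / 2) * ((μ - s) / 2)) ≤
      μ * (α * α) + α * (α * α) - 2 * α * (α * ((μ - s) / 2)) + α * (((μ - s) / 2) * ((μ - s) / 2)) := by
  have h : (α + μ / 2 + s / 2) * (α * α + ((μ - s) / 2) * ((μ - s) / 2)) =
      μ * (α * α) + α * (α * α) - 2 * α * (α * ((μ - s) / 2)) + α * (((μ - s) / 2) * ((μ - s) / 2)) := by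
    linear_combination ((s - μ) / 8) * hs
  exact h.le

private lemma aux_test_up (L α s : ℝ) (hs : s ^ 2 = L ^ 2 + 4 * α ^ 2) (hs0 : 0 ≤ s) :
    L * (α * α) + α * (α * α) - 2 * α * (α * ((L + s) / 2)) + α * (((L + s) / 2) * ((L + s) / 2)) ≤
      (α + L / 2 - s / 2) * (α * α + ((L + s) / 2) * ((L + s) / 2)) := by
  have h : L * (α * α) + α * (α * α) - 2 * α * (α * ((L + s) / 2)) + α * (((L + s) / 2) * ((L + s) / 2)) =
      (α + L / 2 - s / 2) * (α * α + ((L + s) / 2) * ((L + s) / 2)) := by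
    linear_combination ((L + s) / 8) * hs
  exact h.le

private lemma aux_cs {ι : Type*} [Fintype ι] (x y : ι → ℝ) :
    (x ⬝ᵥ y) ^ 2 ≤ (x ⬝ᵥ x) * (y ⬝ᵥ y) := by
  simpa only [dotProduct, pow_two] using Finset.sum_mul_sq_le_sq_mul_sq Finset.univ x y

private lemma aux_dot_nonneg {ι : Type*} [Fintype ι] (x : ι → ℝ) : 0 ≤ x ⬝ᵥ x :=
  Finset.sum_nonneg fun _ _ => mul_self_nonneg _

open Matrix in
private lemma aux_eig {ι : Type*} [Fintype ι] [DecidableEq ι] {A : Matrix ι ι ℝ}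
    (hA : A.IsHermitian) (i : ι) :
    ∃ v : ι → ℝ, v ⬝ᵥ v = 1 ∧ v ⬝ᵥ A *ᵥ v = hA.eigenvalues i := by
  refine ⟨hA.eigenvectorBasis i, ?_, ?_⟩
  · have h2 : (inner ℝ (hA.eigenvectorBasis i) (hA.eigenvectorBasis i) : ℝ) = 1 := by
      rw [real_inner_self_eq_norm_sq, hA.eigenvectorBasis.orthonormal.1 i]; norm_num
    simpa only [PiLp.inner_apply, RCLike.inner_apply, starRingEnd_apply, star_trivial,
      dotProduct] using h2
  · have hb : A *ᵥ (hA.eigenvectorBasis i : ι → ℝ) =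
        hA.eigenvalues i • (hA.eigenvectorBasis i : ι → ℝ) := hA.mulVec_eigenvectorBasis i
    rw [hb, dotProduct_smul, smul_eq_mul]
    have h2 : (inner ℝ (hA.eigenvectorBasis i) (hA.eigenvectorBasis i) : ℝ) = 1 := by
      rw [real_inner_self_eq_norm_sq, hA.eigenvectorBasis.orthonormal.1 i]; norm_num
    have h3 : (hA.eigenvectorBasis i : ι → ℝ) ⬝ᵥ (hA.eigenvectorBasis i : ι → ℝ) = 1 := by
      simpa only [PiLp.inner_apply, RCLike.inner_apply, starRingEnd_apply, star_trivial,
        dotProduct] using h2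
    rw [h3, mul_one]


open Matrix in
private lemma aux_quad_expand {n : ℕ} (A : Matrix (Fin n) (Fin n) ℝ) (a : ℝ)
    (x y : Fin n → ℝ) :
    (Sum.elim x y) ⬝ᵥ (fromBlocks (A + a • 1) ((-a) • 1) ((-a) • 1)
        (a • (1 : Matrix (Fin n) (Fin n) ℝ))).mulVec (Sum.elim x y) =
      x ⬝ᵥ A *ᵥ x + a * (x ⬝ᵥ x) - 2 * a * (x ⬝ᵥ y) + a * (y ⬝ᵥ y) := by
  rw [fromBlocks_mulVec, sumElim_dotProduct_sumElim]
  simp only [Sum.elim_comp_inl, Sum.elim_comp_inr, add_mulVec, neg_mulVec, smul_mulVec, one_mulVec, dotProduct_add, dotProduct_smul,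
    smul_eq_mul, neg_smul, dotProduct_neg, neg_mul]
  rw [dotProduct_comm y x]
  ring


open Matrix in
private lemma aux_spectral {ι : Type*} [Fintype ι] [DecidableEq ι] {A : Matrix ι ι ℝ}
    (hA : A.IsHermitian) (m M : ℝ)
    (hm : ∀ i, m ≤ hA.eigenvalues i) (hM : ∀ i, hA.eigenvalues i ≤ M) (z : ι → ℝ) :
    m * (z ⬝ᵥ z) ≤ z ⬝ᵥ A *ᵥ z ∧ z ⬝ᵥ A *ᵥ z ≤ M * (z ⬝ᵥ z) := by
  have hstar : (star (hA.eigenvectorUnitary : Matrix ι ι ℝ)) =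
      (hA.eigenvectorUnitary : Matrix ι ι ℝ)ᵀ := by
    ext i j; simp [Matrix.star_apply]
  set U : Matrix ι ι ℝ := (hA.eigenvectorUnitary : Matrix ι ι ℝ) with hU
  set w : ι → ℝ := Uᵀ *ᵥ z with hw
  have hUU : U * Uᵀ = 1 := by
    rw [← hstar]; exact Unitary.coe_mul_star_self hA.eigenvectorUnitary
  have key : ∀ v : ι → ℝ, w ⬝ᵥ (Uᵀ *ᵥ v) = z ⬝ᵥ v := by
    intro v
    rw [dotProduct_mulVec, vecMul_transpose, hw, Matrix.mulVec_mulVec, hUU, one_mulVec]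
  have hzw : z ⬝ᵥ z = ∑ i, (w i) ^ 2 := by
    rw [← key z, ← hw]
    simp [dotProduct, sq]
  have hAz : z ⬝ᵥ A *ᵥ z = ∑ i, hA.eigenvalues i * (w i) ^ 2 := by
    calc z ⬝ᵥ A *ᵥ z
        = z ⬝ᵥ (U * (diagonal (RCLike.ofReal ∘ hA.eigenvalues) * star U)) *ᵥ z := by
          rw [← Matrix.mul_assoc]
          exact (congrArg (fun B => z ⬝ᵥ B *ᵥ z) hA.spectral_theorem).trans rfl
      _ = w ⬝ᵥ (diagonal (RCLike.ofReal ∘ hA.eigenvalues)) *ᵥ w := by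
          rw [← Matrix.mulVec_mulVec, ← Matrix.mulVec_mulVec, dotProduct_mulVec, ← Matrix.mulVec_transpose, hstar, ← hw]
      _ = ∑ i, hA.eigenvalues i * (w i) ^ 2 := by
          simp [dotProduct, mulVec_diagonal, sq]
          exact Finset.sum_congr rfl fun i _ => by ring
  constructor
  · rw [hAz, hzw, Finset.mul_sum]
    exact Finset.sum_le_sum fun i _ => mul_le_mul_of_nonneg_right (hm i) (sq_nonneg _)
  · rw [hAz, hzw, Finset.mul_sum]
    exact Finset.sum_le_sum fun i _ => mul_le_mul_of_nonneg_right (hM i) (sq_nonneg _)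

set_option maxHeartbeats 1000000 in
/-- Hessian bounds for the hat-x augmented objective h(x,x̂) = f(x) + (α/2)‖x−x̂‖²:
if μIₙ ⪯ ∇²f ⪯ LIₙ, then H_low ⪯ ∇²h ⪯ H_up, and the condition number
κ_h = λ_max(∇²h)/λ_min(∇²h) lies between
(2α+μ+√(μ²+4α²))/(2α+L−√(L²+4α²)) and (2α+L+√(L²+4α²))/(2α+μ−√(μ²+4α²)). -/
theorem stmt_13 {n : ℕ} (hn : 0 < n) (μ L α : ℝ) (hμ : 0 < μ) (hμL : μ ≤ L) (hα : 0 < α)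
    -- Hf is the Hessian ∇²f(x) at an arbitrary point, with μIₙ ⪯ Hf ⪯ LIₙ:
    (Hf : Matrix (Fin n) (Fin n) ℝ) (hHfsym : Hf.IsHermitian)
    (hlow : ∀ y : Fin n → ℝ, μ * (y ⬝ᵥ y) ≤ y ⬝ᵥ Hf.mulVec y)
    (hup : ∀ y : Fin n → ℝ, y ⬝ᵥ Hf.mulVec y ≤ L * (y ⬝ᵥ y))
    -- Hh is the Hessian of h, ∇²h = [[∇²f + αIₙ, −αIₙ], [−αIₙ, αIₙ]]:
    (hHh : (Matrix.fromBlocks (Hf + α • 1) ((-α) • 1) ((-α) • 1)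
      (α • (1 : Matrix (Fin n) (Fin n) ℝ))).IsHermitian) :
    -- H_low ⪯ ∇²h ⪯ H_up in the Loewner order:
    (∀ z : Fin n ⊕ Fin n → ℝ,
      z ⬝ᵥ (Matrix.fromBlocks ((μ + α) • 1) ((-α) • 1) ((-α) • 1)
        (α • (1 : Matrix (Fin n) (Fin n) ℝ))).mulVec z ≤
      z ⬝ᵥ (Matrix.fromBlocks (Hf + α • 1) ((-α) • 1) ((-α) • 1)
        (α • (1 : Matrix (Fin n) (Fin n) ℝ))).mulVec z) ∧
    (∀ z : Fin n ⊕ Fin n → ℝ,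
      z ⬝ᵥ (Matrix.fromBlocks (Hf + α • 1) ((-α) • 1) ((-α) • 1)
        (α • (1 : Matrix (Fin n) (Fin n) ℝ))).mulVec z ≤
      z ⬝ᵥ (Matrix.fromBlocks ((L + α) • 1) ((-α) • 1) ((-α) • 1)
        (α • (1 : Matrix (Fin n) (Fin n) ℝ))).mulVec z) ∧
    (2 * α + μ + Real.sqrt (μ ^ 2 + 4 * α ^ 2)) /
        (2 * α + L - Real.sqrt (L ^ 2 + 4 * α ^ 2)) ≤
      (⨆ i, hHh.eigenvalues i) / (⨅ i, hHh.eigenvalues i) ∧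
    (⨆ i, hHh.eigenvalues i) / (⨅ i, hHh.eigenvalues i) ≤
      (2 * α + L + Real.sqrt (L ^ 2 + 4 * α ^ 2)) /
        (2 * α + μ - Real.sqrt (μ ^ 2 + 4 * α ^ 2)) := by
  classical
  haveI : Nonempty (Fin n ⊕ Fin n) := ⟨Sum.inl ⟨0, hn⟩⟩
  have hL : 0 < L := lt_of_lt_of_le hμ hμL
  set sμ := Real.sqrt (μ ^ 2 + 4 * α ^ 2) with hsμdef
  set sL := Real.sqrt (L ^ 2 + 4 * α ^ 2) with hsLdef
  have hsμ : sμ ^ 2 = μ ^ 2 + 4 * α ^ 2 := Real.sq_sqrt (by positivity)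
  have hsL : sL ^ 2 = L ^ 2 + 4 * α ^ 2 := Real.sq_sqrt (by positivity)
  have hsμ0 : 0 ≤ sμ := Real.sqrt_nonneg _
  have hsL0 : 0 ≤ sL := Real.sqrt_nonneg _
  have hsμlt : sμ < 2 * α + μ := by nlinarith
  have hsLlt : sL < 2 * α + L := by nlinarith
  have hsμgt : μ ≤ sμ := by nlinarith
  have hsLgt : L ≤ sL := by nlinarith
  -- expansion of the quadratic form of block matrices
  have hsplit : ∀ (A : Matrix (Fin n) (Fin n) ℝ) (z : Fin n ⊕ Fin n → ℝ),
      z ⬝ᵥ (Matrix.fromBlocks (A + α • 1) ((-α) • 1) ((-α) • 1)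
        (α • (1 : Matrix (Fin n) (Fin n) ℝ))).mulVec z =
      (z ∘ Sum.inl) ⬝ᵥ A *ᵥ (z ∘ Sum.inl) + α * ((z ∘ Sum.inl) ⬝ᵥ (z ∘ Sum.inl))
        - 2 * α * ((z ∘ Sum.inl) ⬝ᵥ (z ∘ Sum.inr)) + α * ((z ∘ Sum.inr) ⬝ᵥ (z ∘ Sum.inr)) := by
    intro A z
    conv_lhs => rw [← Sum.elim_comp_inl_inr z, aux_quad_expand]
  have hZZ : ∀ z : Fin n ⊕ Fin n → ℝ,
      z ⬝ᵥ z = (z ∘ Sum.inl) ⬝ᵥ (z ∘ Sum.inl) + (z ∘ Sum.inr) ⬝ᵥ (z ∘ Sum.inr) := by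
    intro z
    conv_lhs => rw [← Sum.elim_comp_inl_inr z, sumElim_dotProduct_sumElim]
  have hsmul : ∀ (c : ℝ) (x : Fin n → ℝ),
      x ⬝ᵥ (c • (1 : Matrix (Fin n) (Fin n) ℝ)) *ᵥ x = c * (x ⬝ᵥ x) := by
    intro c x
    rw [Matrix.smul_mulVec, Matrix.one_mulVec, dotProduct_smul, smul_eq_mul]
  have hadd : ∀ c : ℝ, ((c + α) • (1 : Matrix (Fin n) (Fin n) ℝ)) =
      c • (1 : Matrix (Fin n) (Fin n) ℝ) + α • 1 := fun c => add_smul c α 1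
  -- the two Loewner bounds
  have part1 : ∀ z : Fin n ⊕ Fin n → ℝ,
      z ⬝ᵥ (Matrix.fromBlocks ((μ + α) • 1) ((-α) • 1) ((-α) • 1)
        (α • (1 : Matrix (Fin n) (Fin n) ℝ))).mulVec z ≤
      z ⬝ᵥ (Matrix.fromBlocks (Hf + α • 1) ((-α) • 1) ((-α) • 1)
        (α • (1 : Matrix (Fin n) (Fin n) ℝ))).mulVec z := by
    intro z
    rw [hadd μ, hsplit (μ • 1) z, hsplit Hf z, hsmul μ (z ∘ Sum.inl)]
    have := hlow (z ∘ Sum.inl)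
    linarith
  have part2 : ∀ z : Fin n ⊕ Fin n → ℝ,
      z ⬝ᵥ (Matrix.fromBlocks (Hf + α • 1) ((-α) • 1) ((-α) • 1)
        (α • (1 : Matrix (Fin n) (Fin n) ℝ))).mulVec z ≤
      z ⬝ᵥ (Matrix.fromBlocks ((L + α) • 1) ((-α) • 1) ((-α) • 1)
        (α • (1 : Matrix (Fin n) (Fin n) ℝ))).mulVec z := by
    intro z
    rw [hadd L, hsplit (L • 1) z, hsplit Hf z, hsmul L (z ∘ Sum.inl)]
    have := hup (z ∘ Sum.inl)
    linarith
  -- Rayleigh quotient bounds for the full Hessian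
  have hQlow : ∀ z : Fin n ⊕ Fin n → ℝ,
      (α + μ / 2 - sμ / 2) * (z ⬝ᵥ z) ≤
      z ⬝ᵥ (Matrix.fromBlocks (Hf + α • 1) ((-α) • 1) ((-α) • 1)
        (α • (1 : Matrix (Fin n) (Fin n) ℝ))).mulVec z := by
    intro z
    rw [hsplit Hf z, hZZ z]
    have hX := aux_dot_nonneg (z ∘ Sum.inl)
    have hY := aux_dot_nonneg (z ∘ Sum.inr)
    have ha2 : (Real.sqrt ((z ∘ Sum.inl) ⬝ᵥ (z ∘ Sum.inl))) ^ 2 = (z ∘ Sum.inl) ⬝ᵥ (z ∘ Sum.inl) :=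
      Real.sq_sqrt hX
    have hb2 : (Real.sqrt ((z ∘ Sum.inr) ⬝ᵥ (z ∘ Sum.inr))) ^ 2 = (z ∘ Sum.inr) ⬝ᵥ (z ∘ Sum.inr) :=
      Real.sq_sqrt hY
    have habs : |(z ∘ Sum.inl) ⬝ᵥ (z ∘ Sum.inr)| ≤
        Real.sqrt ((z ∘ Sum.inl) ⬝ᵥ (z ∘ Sum.inl)) * Real.sqrt ((z ∘ Sum.inr) ⬝ᵥ (z ∘ Sum.inr)) := by
      rw [← Real.sqrt_sq_eq_abs, ← Real.sqrt_mul hX]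
      exact Real.sqrt_le_sqrt (aux_cs _ _)
    exact aux_scalar_low μ α sμ _ _ _ _ _ _ hα hμ hsμ hsμ0 ha2 hb2
      (abs_le.mp habs).2 (hlow (z ∘ Sum.inl))
  have hQup : ∀ z : Fin n ⊕ Fin n → ℝ,
      z ⬝ᵥ (Matrix.fromBlocks (Hf + α • 1) ((-α) • 1) ((-α) • 1)
        (α • (1 : Matrix (Fin n) (Fin n) ℝ))).mulVec z ≤
      (α + L / 2 + sL / 2) * (z ⬝ᵥ z) := by
    intro z
    rw [hsplit Hf z, hZZ z]
    have hX := aux_dot_nonneg (z ∘ Sum.inl)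
    have hY := aux_dot_nonneg (z ∘ Sum.inr)
    have ha2 : (Real.sqrt ((z ∘ Sum.inl) ⬝ᵥ (z ∘ Sum.inl))) ^ 2 = (z ∘ Sum.inl) ⬝ᵥ (z ∘ Sum.inl) :=
      Real.sq_sqrt hX
    have hb2 : (Real.sqrt ((z ∘ Sum.inr) ⬝ᵥ (z ∘ Sum.inr))) ^ 2 = (z ∘ Sum.inr) ⬝ᵥ (z ∘ Sum.inr) :=
      Real.sq_sqrt hY
    have habs : |(z ∘ Sum.inl) ⬝ᵥ (z ∘ Sum.inr)| ≤
        Real.sqrt ((z ∘ Sum.inl) ⬝ᵥ (z ∘ Sum.inl)) * Real.sqrt ((z ∘ Sum.inr) ⬝ᵥ (z ∘ Sum.inr)) := by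
      rw [← Real.sqrt_sq_eq_abs, ← Real.sqrt_mul hX]
      exact Real.sqrt_le_sqrt (aux_cs _ _)
    exact aux_scalar_up L α sL _ _ _ _ _ _ hα hL hsL hsL0 ha2 hb2
      (abs_le.mp habs).1 (hup (z ∘ Sum.inl))
  -- individual eigenvalue bounds
  have heiglow : ∀ i, (α + μ / 2 - sμ / 2) ≤ hHh.eigenvalues i := by
    intro i
    obtain ⟨v, hv1, hv2⟩ := aux_eig hHh i
    have h := hQlow v
    rw [hv1, mul_one] at h
    rw [← hv2]
    exact h
  have heigup : ∀ i, hHh.eigenvalues i ≤ α + L / 2 + sL / 2 := by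
    intro i
    obtain ⟨v, hv1, hv2⟩ := aux_eig hHh i
    have h := hQup v
    rw [hv1, mul_one] at h
    rw [← hv2]
    exact h
  set M := ⨆ i, hHh.eigenvalues i with hMdef
  set m := ⨅ i, hHh.eigenvalues i with hmdef
  have hm_le : ∀ i, m ≤ hHh.eigenvalues i := fun i =>
    ciInf_le (Set.Finite.bddBelow (Set.finite_range _)) i
  have hM_ge : ∀ i, hHh.eigenvalues i ≤ M := fun i =>
    le_ciSup (Set.Finite.bddAbove (Set.finite_range _)) i
  have hm_lb : (α + μ / 2 - sμ / 2) ≤ m := le_ciInf heiglow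
  have hM_ub : M ≤ α + L / 2 + sL / 2 := ciSup_le heigup
  have hm_pos : 0 < m := lt_of_lt_of_le (by linarith) hm_lb
  -- test vector for the largest eigenvalue
  have hsing : ∀ c d : ℝ,
      (Pi.single (⟨0, hn⟩ : Fin n) c : Fin n → ℝ) ⬝ᵥ (Pi.single ⟨0, hn⟩ d : Fin n → ℝ) = c * d := by
    intro c d; rw [single_dotProduct, Pi.single_eq_same]
  have hMl : (α + μ / 2 + sμ / 2) ≤ M := by
    set t₁ : ℝ := (μ - sμ) / 2 with ht₁
    have hq1 := aux_quad_expand Hf α (Pi.single (⟨0, hn⟩ : Fin n) α)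
      (Pi.single (⟨0, hn⟩ : Fin n) t₁)
    rw [hsing, hsing, hsing] at hq1
    have hz1 : (Sum.elim (Pi.single (⟨0, hn⟩ : Fin n) α : Fin n → ℝ)
        (Pi.single (⟨0, hn⟩ : Fin n) t₁ : Fin n → ℝ)) ⬝ᵥ
        (Sum.elim (Pi.single (⟨0, hn⟩ : Fin n) α : Fin n → ℝ)
        (Pi.single (⟨0, hn⟩ : Fin n) t₁ : Fin n → ℝ)) = α * α + t₁ * t₁ := by
      rw [sumElim_dotProduct_sumElim, hsing, hsing]
    have hsp := (aux_spectral hHh m M hm_le hM_ge (Sum.elim (Pi.single (⟨0, hn⟩ : Fin n) α)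
      (Pi.single (⟨0, hn⟩ : Fin n) t₁))).2
    rw [hz1, hq1] at hsp
    have hlow1 := hlow (Pi.single (⟨0, hn⟩ : Fin n) α)
    rw [hsing] at hlow1
    have htest := aux_test_low μ α sμ hsμ hsμ0
    rw [← ht₁] at htest
    have hc : 0 < α * α + t₁ * t₁ := add_pos_of_pos_of_nonneg (mul_pos hα hα) (mul_self_nonneg t₁)
    have : (α + μ / 2 + sμ / 2) * (α * α + t₁ * t₁) ≤ M * (α * α + t₁ * t₁) := by
      calc (α + μ / 2 + sμ / 2) * (α * α + t₁ * t₁) ≤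
          μ * (α * α) + α * (α * α) - 2 * α * (α * t₁) + α * (t₁ * t₁) := htest
        _ ≤ M * (α * α + t₁ * t₁) := by linarith
    exact le_of_mul_le_mul_right this hc
  -- test vector for the smallest eigenvalue
  have hmL : m ≤ (α + L / 2 - sL / 2) := by
    set t₂ : ℝ := (L + sL) / 2 with ht₂
    have hq2 := aux_quad_expand Hf α (Pi.single (⟨0, hn⟩ : Fin n) α)
      (Pi.single (⟨0, hn⟩ : Fin n) t₂)
    rw [hsing, hsing, hsing] at hq2
    have hz2 : (Sum.elim (Pi.single (⟨0, hn⟩ : Fin n) α : Fin n → ℝ)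
        (Pi.single (⟨0, hn⟩ : Fin n) t₂ : Fin n → ℝ)) ⬝ᵥ
        (Sum.elim (Pi.single (⟨0, hn⟩ : Fin n) α : Fin n → ℝ)
        (Pi.single (⟨0, hn⟩ : Fin n) t₂ : Fin n → ℝ)) = α * α + t₂ * t₂ := by
      rw [sumElim_dotProduct_sumElim, hsing, hsing]
    have hsp := (aux_spectral hHh m M hm_le hM_ge (Sum.elim (Pi.single (⟨0, hn⟩ : Fin n) α)
      (Pi.single (⟨0, hn⟩ : Fin n) t₂))).1
    rw [hz2, hq2] at hsp
    have hup2 := hup (Pi.single (⟨0, hn⟩ : Fin n) α)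
    rw [hsing] at hup2
    have htest := aux_test_up L α sL hsL hsL0
    rw [← ht₂] at htest
    have hc : 0 < α * α + t₂ * t₂ := add_pos_of_pos_of_nonneg (mul_pos hα hα) (mul_self_nonneg t₂)
    have : m * (α * α + t₂ * t₂) ≤ (α + L / 2 - sL / 2) * (α * α + t₂ * t₂) := by
      calc m * (α * α + t₂ * t₂) ≤
          Pi.single (⟨0, hn⟩ : Fin n) α ⬝ᵥ Hf *ᵥ Pi.single (⟨0, hn⟩ : Fin n) α
            + α * (α * α) - 2 * α * (α * t₂) + α * (t₂ * t₂) := hsp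
        _ ≤ (α + L / 2 - sL / 2) * (α * α + t₂ * t₂) := by linarith
    exact le_of_mul_le_mul_right this hc
  have hM0 : 0 ≤ M := le_trans (by linarith) hMl
  refine ⟨part1, part2, ?_, ?_⟩
  · have hnum : 2 * α + μ + sμ = 2 * (α + μ / 2 + sμ / 2) := by ring
    have hden : 2 * α + L - sL = 2 * (α + L / 2 - sL / 2) := by ring
    rw [hnum, hden, mul_div_mul_left _ _ (by norm_num : (2:ℝ) ≠ 0)]
    exact div_le_div₀ hM0 hMl hm_pos hmL
  · have hnum : 2 * α + L + sL = 2 * (α + L / 2 + sL / 2) := by ring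
    have hden : 2 * α + μ - sμ = 2 * (α + μ / 2 - sμ / 2) := by ring
    rw [hnum, hden, mul_div_mul_left _ _ (by norm_num : (2:ℝ) ≠ 0)]
    exact div_le_div₀ (by linarith) hM_ub (by linarith) hm_lb
end

section
/- For all 0 < μ ≤ L and α > 0, the upper bound on the hat-x condition number strictly exceeds the original condition number: (2α+L+√(L²+4α²))/(2α+μ−√(μ²+4α²)) > L/μ. -/
/-- The upper bound on the hat-x condition number strictly exceeds the original one:
(2α+L+√(L²+4α²))/(2α+μ−√(μ²+4α²)) > L/μ for 0 < μ ≤ L and α > 0. -/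
theorem stmt_14 (μ L α : ℝ) (hμ : 0 < μ) (hμL : μ ≤ L) (hα : 0 < α) :
    (2 * α + L + Real.sqrt (L ^ 2 + 4 * α ^ 2)) /
      (2 * α + μ - Real.sqrt (μ ^ 2 + 4 * α ^ 2)) > L / μ := by
  have hL : 0 < L := lt_of_lt_of_le hμ hμL
  set sμ := Real.sqrt (μ ^ 2 + 4 * α ^ 2) with hsμ
  set sL := Real.sqrt (L ^ 2 + 4 * α ^ 2) with hsL
  have hsμlt : sμ < μ + 2 * α := by
    rw [hsμ, show μ ^ 2 + 4 * α ^ 2 = (μ + 2*α)^2 - 4*μ*α by ring]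
    have h2 : (0:ℝ) < μ + 2 * α := by linarith
    nlinarith [Real.sq_sqrt (by nlinarith : (0:ℝ) ≤ (μ + 2*α)^2 - 4*μ*α),
      Real.sqrt_nonneg ((μ + 2*α)^2 - 4*μ*α)]
  have hden : 0 < 2 * α + μ - sμ := by linarith
  have hsμgt : 2 * α < sμ := by
    rw [hsμ]
    nlinarith [Real.sq_sqrt (by positivity : (0:ℝ) ≤ μ ^ 2 + 4 * α ^ 2),
      Real.sqrt_nonneg (μ ^ 2 + 4 * α ^ 2)]
  have hsLgt : L < sL := by
    rw [hsL]
    nlinarith [Real.sq_sqrt (by positivity : (0:ℝ) ≤ L ^ 2 + 4 * α ^ 2),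
      Real.sqrt_nonneg (L ^ 2 + 4 * α ^ 2)]
  rw [gt_iff_lt, div_lt_div_iff₀ hμ hden]
  nlinarith
end
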